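/- For the semi-discrete two-species scheme with charges q_1, q_2 and g_j^i = c_j^i e^{q_i ψ_j}, the multi-species free energy F = h∑_{i=1}^m ∑_{j=1}^N (c_j^i ln c_j^i + q_i c_j^i ψ_j / 2) + (σ_a ψ_1 + σ_b ψ_N)/2 satisfies dF/dt = −(1/h)∑_{i=1}^m ∑_{j=1}^{N−1} e^{−q_i(ψ_{j+1}+ψ_j)/2}(ln g_{j+1}^i − ln g_j^i)(g_{j+1}^i − g_j^i) ≤ 0. -/

import Mathlib

/-!
The scheme reads `ċⱼ = (Fⱼ - Fⱼ₋₁) / h²` with zero boundary fluxes `F₀ = F_N = 0`. Split the free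
energy into the entropy `h ∑ c log c` and the electrostatic energy
`E = (h/2) ∑ ρψ + (σa ψ₁ + σb ψ_N) / 2`, where `ρⱼ = ∑ᵢ qᵢ cⱼⁱ`. Both `ψ` and `ψ̇` solve a discrete
Neumann–Poisson problem (with data `σ` and `0`), so Green's identity gives
`h ∑ ρψ̇ = h ∑ ρ̇ψ - (σa ψ̇₁ + σb ψ̇_N)`, whence `Ė = h ∑ ρ̇ψ`. Thus
`Ḟ = h ∑ᵢ ∑ⱼ ċⱼⁱ (log gⱼⁱ + 1)`, and summation by parts against the zero fluxes turns this into
`-(1/h) ∑ Fⱼⁱ (log gⱼ₊₁ⁱ - log gⱼⁱ)`. Since `Fⱼ = e^{…} (gⱼ₊₁ - gⱼ)`, every term is a product of two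
increments of the increasing function `log`, hence nonnegative.
-/

open Finset Real

section SummationByParts

variable {R : Type*} [CommRing R]

theorem sum_Icc_sub_mul_add_sum_range_mul_sub (f a : ℕ → R) (N : ℕ) :
    ∑ j ∈ Icc 1 N, (f j - f (j - 1)) * a j + ∑ j ∈ range N, f j * (a (j + 1) - a j) =
      f N * a N - f 0 * a 0 := by
  induction N with
  | zero => simp
  | succ n ih =>
    rw [sum_Icc_succ_top (by omega), sum_range_succ, Nat.add_sub_cancel]
    linear_combination ih

theorem sum_Icc_sub_mul_eq_neg_sum_mul_sub {f : ℕ → R} {N : ℕ} (h0 : f 0 = 0) (hN : f N = 0)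
    (a : ℕ → R) :
    ∑ j ∈ Icc 1 N, (f j - f (j - 1)) * a j = -∑ j ∈ Icc 1 (N - 1), f j * (a (j + 1) - a j) := by
  have key := sum_Icc_sub_mul_add_sum_range_mul_sub f a N
  rcases N with _ | M
  · simp
  rw [range_eq_Ico, sum_eq_sum_Ico_succ_bot M.succ_pos, Nat.succ_eq_add_one, h0, hN,
    Ico_add_one_right_eq_Icc] at key
  rw [Nat.add_sub_cancel]
  linear_combination key

theorem sum_Icc_laplacian_mul_sub_mul_laplacian (a b : ℕ → R) (N : ℕ) :
    ∑ j ∈ Icc 1 N,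
        ((a (j + 1) - 2 * a j + a (j - 1)) * b j - a j * (b (j + 1) - 2 * b j + b (j - 1))) =
      (a (N + 1) * b N - a N * b (N + 1)) - (a 1 * b 0 - a 0 * b 1) := by
  induction N with
  | zero => simp
  | succ n ih =>
    rw [sum_Icc_succ_top (by omega), ih, Nat.add_sub_cancel]
    ring

end SummationByParts

theorem Real.log_sub_log_mul_sub_nonneg {x y : ℝ} (hx : 0 < x) (hy : 0 < y) :
    0 ≤ (log y - log x) * (y - x) :=
  (monovaryOn_id_iff.2 strictMonoOn_log.monotoneOn).sub_mul_sub_nonneg hx hy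

theorem sum_exp_mul_log_sub_log_mul_sub_nonneg {N : ℕ} {g : ℕ → ℝ} (hg : ∀ j ∈ Icc 1 N, 0 < g j)
    (a : ℕ → ℝ) :
    0 ≤ ∑ j ∈ Icc 1 (N - 1), exp (a j) * (log (g (j + 1)) - log (g j)) * (g (j + 1) - g j) := by
  refine sum_nonneg fun j hj => ?_
  obtain ⟨hj1, hjN⟩ := mem_Icc.1 hj
  rw [mul_assoc]
  exact mul_nonneg (exp_pos _).le (log_sub_log_mul_sub_nonneg
    (hg j (mem_Icc.2 ⟨hj1, by omega⟩)) (hg (j + 1) (mem_Icc.2 ⟨by omega, by omega⟩)))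

theorem sum_charge_mul_sub_eq_of_neumann_poisson {ι : Type*} (S : Finset ι) (N : ℕ) {h : ℝ}
    (hh : h ≠ 0) (σa σb : ℝ) (q : ι → ℝ) (c c' : ι → ℕ → ℝ) (ψ P : ℕ → ℝ)
    (hψ : ∀ j ∈ Icc 1 N, ψ (j + 1) - 2 * ψ j + ψ (j - 1) = -h ^ 2 * ∑ i ∈ S, q i * c i j)
    (hP : ∀ j ∈ Icc 1 N, P (j + 1) - 2 * P j + P (j - 1) = -h ^ 2 * ∑ i ∈ S, q i * c' i j)
    (hψa : ψ 0 = ψ 1 + h * σa) (hψb : ψ (N + 1) = ψ N + h * σb)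
    (hPa : P 0 = P 1) (hPb : P (N + 1) = P N) :
    ∑ i ∈ S, ∑ j ∈ Icc 1 N, q i * (c i j * P j - c' i j * ψ j) = -(σa * P 1 + σb * P N) / h := by
  have green := sum_Icc_laplacian_mul_sub_mul_laplacian ψ P N
  have hsum : ∑ j ∈ Icc 1 N,
      ((ψ (j + 1) - 2 * ψ j + ψ (j - 1)) * P j - ψ j * (P (j + 1) - 2 * P j + P (j - 1))) =
        -h ^ 2 * ∑ i ∈ S, ∑ j ∈ Icc 1 N, q i * (c i j * P j - c' i j * ψ j) := by
    rw [sum_comm, mul_sum]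
    refine sum_congr rfl fun j hj => ?_
    simp only [hψ j hj, hP j hj, mul_sum, sum_mul, ← sum_sub_distrib]
    exact sum_congr rfl fun i _ => by ring
  rw [hsum, hψa, hψb, hPa, hPb] at green
  rw [eq_div_iff hh]
  apply mul_left_cancel₀ hh
  linear_combination -green

theorem hasDerivAt_electrostatic_energy {ι : Type*} (S : Finset ι) (N : ℕ) {h : ℝ} (hh : h ≠ 0)
    (σa σb : ℝ) (q : ι → ℝ) {c : ι → ℕ → ℝ → ℝ} {c' : ι → ℕ → ℝ} {ψ : ℕ → ℝ → ℝ} {t : ℝ}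
    (hc : ∀ i ∈ S, ∀ j ∈ Icc 1 N, HasDerivAt (c i j) (c' i j) t)
    (hψ : ∀ j, DifferentiableAt ℝ (ψ j) t)
    (hpoisson : ∀ s, ∀ j ∈ Icc 1 N,
      ψ (j + 1) s - 2 * ψ j s + ψ (j - 1) s = -h ^ 2 * ∑ i ∈ S, q i * c i j s)
    (hbca : ∀ s, ψ 0 s = ψ 1 s + h * σa) (hbcb : ∀ s, ψ (N + 1) s = ψ N s + h * σb) :
    HasDerivAt (fun s => h * ∑ i ∈ S, ∑ j ∈ Icc 1 N, q i * c i j s * ψ j s / 2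
        + (σa * ψ 1 s + σb * ψ N s) / 2)
      (h * ∑ i ∈ S, ∑ j ∈ Icc 1 N, q i * c' i j * ψ j t) t := by
  set P : ℕ → ℝ := fun j => deriv (ψ j) t
  have hP : ∀ j, HasDerivAt (ψ j) (P j) t := fun j => (hψ j).hasDerivAt
  have hPa : P 0 = P 1 := by
    simp only [P, show ψ 0 = fun s => ψ 1 s + h * σa from funext hbca, deriv_add_const]
  have hPb : P (N + 1) = P N := by
    simp only [P, show ψ (N + 1) = fun s => ψ N s + h * σb from funext hbcb, deriv_add_const]
  have hΔP : ∀ j ∈ Icc 1 N,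
      P (j + 1) - 2 * P j + P (j - 1) = -h ^ 2 * ∑ i ∈ S, q i * c' i j := by
    intro j hj
    have lhs := ((hP (j + 1)).sub ((hP j).const_mul 2)).add (hP (j - 1))
    have rhs := (HasDerivAt.fun_sum fun i hi => (hc i hi j hj).const_mul (q i)).const_mul (-h ^ 2)
    exact lhs.unique <|
      rhs.congr_of_eventuallyEq (Filter.Eventually.of_forall fun s => hpoisson s j hj)
  have reciprocity := sum_charge_mul_sub_eq_of_neumann_poisson S N hh σa σb q (fun i j => c i j t) c'
    (fun j => ψ j t) P (fun j => hpoisson t j) hΔP (hbca t) (hbcb t) hPa hPb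
  have hE := ((HasDerivAt.fun_sum fun i hi => HasDerivAt.fun_sum fun j hj =>
      (((hc i hi j hj).const_mul (q i)).mul (hP j)).div_const 2).const_mul h).add
    ((((hP 1).const_mul σa).add ((hP N).const_mul σb)).div_const 2)
  refine hE.congr_deriv ?_
  have split : ∑ i ∈ S, ∑ j ∈ Icc 1 N, (q i * c' i j * ψ j t + q i * c i j t * P j) / 2 =
      ∑ i ∈ S, ∑ j ∈ Icc 1 N, q i * c' i j * ψ j t
        + (∑ i ∈ S, ∑ j ∈ Icc 1 N, q i * (c i j t * P j - c' i j * ψ j t)) / 2 := by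
    simp only [sum_div, ← sum_add_distrib]
    exact sum_congr rfl fun i _ => sum_congr rfl fun j _ => by ring
  rw [split, reciprocity]
  field_simp
  ring

theorem hasDerivAt_free_energy {ι : Type*} (S : Finset ι) (N : ℕ) {h : ℝ} (hh : h ≠ 0)
    (σa σb : ℝ) (q : ι → ℝ) {c : ι → ℕ → ℝ → ℝ} {c' : ι → ℕ → ℝ} {ψ : ℕ → ℝ → ℝ} {t : ℝ}
    (hcpos : ∀ i ∈ S, ∀ j ∈ Icc 1 N, 0 < c i j t)
    (hc : ∀ i ∈ S, ∀ j ∈ Icc 1 N, HasDerivAt (c i j) (c' i j) t)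
    (hψ : ∀ j, DifferentiableAt ℝ (ψ j) t)
    (hpoisson : ∀ s, ∀ j ∈ Icc 1 N,
      ψ (j + 1) s - 2 * ψ j s + ψ (j - 1) s = -h ^ 2 * ∑ i ∈ S, q i * c i j s)
    (hbca : ∀ s, ψ 0 s = ψ 1 s + h * σa) (hbcb : ∀ s, ψ (N + 1) s = ψ N s + h * σb) :
    HasDerivAt (fun s => h * ∑ i ∈ S, ∑ j ∈ Icc 1 N,
        (c i j s * log (c i j s) + q i * c i j s * ψ j s / 2) + (σa * ψ 1 s + σb * ψ N s) / 2)
      (h * ∑ i ∈ S, ∑ j ∈ Icc 1 N, c' i j * (log (c i j t) + 1 + q i * ψ j t)) t := by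
  have hEntropy := (HasDerivAt.fun_sum fun i hi => HasDerivAt.fun_sum fun j hj =>
    (hasDerivAt_mul_log (hcpos i hi j hj).ne').comp t (hc i hi j hj)).const_mul h
  have hEnergy := hasDerivAt_electrostatic_energy S N hh σa σb q hc hψ hpoisson hbca hbcb
  refine ((hEntropy.add hEnergy).congr_deriv ?_).congr_of_eventuallyEq
    (Filter.Eventually.of_forall fun s => ?_)
  · rw [← mul_add, ← sum_add_distrib]
    refine congrArg _ (sum_congr rfl fun i _ => ?_)
    rw [← sum_add_distrib]
    exact sum_congr rfl fun j _ => by ring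
  · simp only [Pi.add_apply, Function.comp_apply, sum_add_distrib]
    ring

theorem species_free_energy_rate_eq {N : ℕ} {h q : ℝ} {c g ψ Fl : ℕ → ℝ}
    (hc : ∀ j ∈ Icc 1 N, 0 < c j) (hg : ∀ j, g j = c j * exp (q * ψ j))
    (hFl0 : Fl 0 = 0) (hFlN : Fl N = 0)
    (hFl : ∀ j, 1 ≤ j → j < N → Fl j = exp (-(q * ((ψ j + ψ (j + 1)) / 2))) * (g (j + 1) - g j)) :
    h * ∑ j ∈ Icc 1 N, (Fl j - Fl (j - 1)) / h ^ 2 * (log (c j) + 1 + q * ψ j) =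
      -(1 / h) * ∑ j ∈ Icc 1 (N - 1),
        exp (-(q * ((ψ (j + 1) + ψ j) / 2))) * (log (g (j + 1)) - log (g j)) * (g (j + 1) - g j) := by
  have hlog : ∀ j ∈ Icc 1 N, (Fl j - Fl (j - 1)) / h ^ 2 * (log (c j) + 1 + q * ψ j) =
      (Fl j - Fl (j - 1)) * (log (g j) + 1) / h ^ 2 := by
    intro j hj
    rw [hg, log_mul (hc j hj).ne' (exp_ne_zero _), log_exp]
    ring
  rw [sum_congr rfl hlog, ← sum_div, sum_Icc_sub_mul_eq_neg_sum_mul_sub hFl0 hFlN]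
  have hflux : ∀ j ∈ Icc 1 (N - 1), Fl j * (log (g (j + 1)) + 1 - (log (g j) + 1)) =
      exp (-(q * ((ψ (j + 1) + ψ j) / 2))) * (log (g (j + 1)) - log (g j)) * (g (j + 1) - g j) := by
    intro j hj
    obtain ⟨hj1, hjN⟩ := mem_Icc.1 hj
    rw [hFl j hj1 (by omega), add_comm (ψ j)]
    ring
  rw [sum_congr rfl hflux]
  field_simp

theorem multispecies_free_energy_dissipation_general
    (N m : ℕ) (h : ℝ) (hh : 0 < h)
    (σa σb : ℝ) (q : ℕ → ℝ)
    (c g : ℕ → ℕ → ℝ → ℝ) (ψ : ℕ → ℝ → ℝ) (Fl : ℕ → ℕ → ℝ → ℝ)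
    (hgdef : ∀ i j t, g i j t = c i j t * Real.exp (q i * ψ j t))
    (hcpos : ∀ i ∈ Finset.Icc 1 m, ∀ j ∈ Finset.Icc 1 N, ∀ t : ℝ, 0 < c i j t)
    (hψdiff : ∀ j, Differentiable ℝ (ψ j))
    (hFl0 : ∀ i t, Fl i 0 t = 0) (hFlN : ∀ i t, Fl i N t = 0)
    (hFl : ∀ i ∈ Finset.Icc 1 m, ∀ j, 1 ≤ j → j < N → ∀ t : ℝ,
      Fl i j t = Real.exp (-(q i * ((ψ j t + ψ (j + 1) t) / 2))) * (g i (j + 1) t - g i j t))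
    (hscheme : ∀ i ∈ Finset.Icc 1 m, ∀ j ∈ Finset.Icc 1 N, ∀ t : ℝ,
      HasDerivAt (c i j) ((Fl i j t - Fl i (j - 1) t) / h ^ 2) t)
    (hpoisson : ∀ t : ℝ, ∀ j ∈ Finset.Icc 1 N,
      ψ (j + 1) t - 2 * ψ j t + ψ (j - 1) t
        = -h ^ 2 * ∑ i ∈ Finset.Icc 1 m, q i * c i j t)
    (hbca : ∀ t : ℝ, ψ 0 t = ψ 1 t + h * σa)
    (hbcb : ∀ t : ℝ, ψ (N + 1) t = ψ N t + h * σb)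
    (F : ℝ → ℝ)
    (hF : ∀ t, F t = h * ∑ i ∈ Finset.Icc 1 m, ∑ j ∈ Finset.Icc 1 N,
        (c i j t * Real.log (c i j t) + q i * c i j t * ψ j t / 2)
      + (σa * ψ 1 t + σb * ψ N t) / 2) :
    ∀ t : ℝ,
      HasDerivAt F
        (-(1 / h) * ∑ i ∈ Finset.Icc 1 m, ∑ j ∈ Finset.Icc 1 (N - 1),
          Real.exp (-(q i * ((ψ (j + 1) t + ψ j t) / 2))) *
            (Real.log (g i (j + 1) t) - Real.log (g i j t)) * (g i (j + 1) t - g i j t)) t ∧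
      -(1 / h) * ∑ i ∈ Finset.Icc 1 m, ∑ j ∈ Finset.Icc 1 (N - 1),
          Real.exp (-(q i * ((ψ (j + 1) t + ψ j t) / 2))) *
            (Real.log (g i (j + 1) t) - Real.log (g i j t)) * (g i (j + 1) t - g i j t) ≤ 0 := by
  intro t
  have hF' := hasDerivAt_free_energy _ N hh.ne' σa σb q (hcpos · · · · t) (hscheme · · · · t)
    (fun j => (hψdiff j).differentiableAt) hpoisson hbca hbcb
  rw [← funext hF] at hF'
  refine ⟨hF'.congr_deriv ?_, mul_nonpos_of_nonpos_of_nonneg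
    (neg_nonpos.2 (one_div_pos.2 hh).le) (sum_nonneg fun i hi => ?_)⟩
  · rw [mul_sum, mul_sum]
    exact sum_congr rfl fun i hi => species_free_energy_rate_eq (hcpos i hi · · t) (hgdef i · t)
      (hFl0 i t) (hFlN i t) (hFl i hi · · · t)
  · refine sum_exp_mul_log_sub_log_mul_sub_nonneg (g := (g i · t)) (fun j hj => ?_)
      fun j => -(q i * ((ψ (j + 1) t + ψ j t) / 2))
    rw [hgdef]
    exact mul_pos (hcpos i hi j hj t) (exp_pos _)

/-- Semi-discrete free energy dissipation for the multi-species scheme. -/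
theorem multispecies_free_energy_dissipation
    (N m : ℕ) (hN : 1 ≤ N) (hm : 1 ≤ m) (h : ℝ) (hh : 0 < h)
    (σa σb : ℝ) (q : ℕ → ℝ)
    (c g : ℕ → ℕ → ℝ → ℝ) (ψ : ℕ → ℝ → ℝ) (Fl : ℕ → ℕ → ℝ → ℝ)
    (hgdef : ∀ i j t, g i j t = c i j t * Real.exp (q i * ψ j t))
    (hcpos : ∀ i ∈ Finset.Icc 1 m, ∀ j ∈ Finset.Icc 1 N, ∀ t : ℝ, 0 < c i j t)
    (hψdiff : ∀ j, Differentiable ℝ (ψ j))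
    (hFl0 : ∀ i t, Fl i 0 t = 0) (hFlN : ∀ i t, Fl i N t = 0)
    (hFl : ∀ i ∈ Finset.Icc 1 m, ∀ j, 1 ≤ j → j < N → ∀ t : ℝ,
      Fl i j t = Real.exp (-(q i * ((ψ j t + ψ (j + 1) t) / 2))) * (g i (j + 1) t - g i j t))
    (hscheme : ∀ i ∈ Finset.Icc 1 m, ∀ j ∈ Finset.Icc 1 N, ∀ t : ℝ,
      HasDerivAt (c i j) ((Fl i j t - Fl i (j - 1) t) / h ^ 2) t)
    (hpoisson : ∀ t : ℝ, ∀ j ∈ Finset.Icc 1 N,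
      ψ (j + 1) t - 2 * ψ j t + ψ (j - 1) t
        = -h ^ 2 * ∑ i ∈ Finset.Icc 1 m, q i * c i j t)
    (hbca : ∀ t : ℝ, ψ 0 t = ψ 1 t + h * σa)
    (hbcb : ∀ t : ℝ, ψ (N + 1) t = ψ N t + h * σb)
    (F : ℝ → ℝ)
    (hF : ∀ t, F t = h * ∑ i ∈ Finset.Icc 1 m, ∑ j ∈ Finset.Icc 1 N,
        (c i j t * Real.log (c i j t) + q i * c i j t * ψ j t / 2)
      + (σa * ψ 1 t + σb * ψ N t) / 2) :
    ∀ t : ℝ,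
      HasDerivAt F
        (-(1 / h) * ∑ i ∈ Finset.Icc 1 m, ∑ j ∈ Finset.Icc 1 (N - 1),
          Real.exp (-(q i * ((ψ (j + 1) t + ψ j t) / 2))) *
            (Real.log (g i (j + 1) t) - Real.log (g i j t)) * (g i (j + 1) t - g i j t)) t ∧
      -(1 / h) * ∑ i ∈ Finset.Icc 1 m, ∑ j ∈ Finset.Icc 1 (N - 1),
          Real.exp (-(q i * ((ψ (j + 1) t + ψ j t) / 2))) *
            (Real.log (g i (j + 1) t) - Real.log (g i j t)) * (g i (j + 1) t - g i j t) ≤ 0 :=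
  multispecies_free_energy_dissipation_general N m h hh σa σb q c g ψ Fl hgdef hcpos hψdiff hFl0
    hFlN hFl hscheme hpoisson hbca hbcb F hF
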